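/- Let Ω ⊆ ℝ^d be a C⁴ bounded open set. The set {V·n restricted to ∂Ω : V ∈ W^{5,∞}(ℝ^d, ℝ^d), ∫_{∂Ω} V·n = 0} is dense in C_m(∂Ω) := {φ ∈ C(∂Ω) : ∫_{∂Ω} φ = 0} with respect to the uniform norm. -/

import Mathlib

open MeasureTheory Real Filter Bornology

/-- The Laplacian of `u` at `x`. -/
noncomputable def lap {d : ℕ} (u : EuclideanSpace ℝ (Fin d) → ℝ) (x : EuclideanSpace ℝ (Fin d)) : ℝ :=
  ∑ i : Fin d, iteratedFDeriv ℝ 2 u x ![EuclideanSpace.single i 1, EuclideanSpace.single i 1]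

/-- Smooth test function compactly supported in `Ω`. -/
def Test {d : ℕ} (Ω : Set (EuclideanSpace ℝ (Fin d))) (φ : EuclideanSpace ℝ (Fin d) → ℝ) : Prop :=
  ContDiff ℝ (⊤ : ℕ∞) φ ∧ HasCompactSupport φ ∧ tsupport φ ⊆ Ω

/-- `u ∈ H²₀(Ω)`: `u` is the `L²(Ω)` limit of a sequence of test functions that is Cauchy
in the `H²` norm. -/
def MemH20 {d : ℕ} (Ω : Set (EuclideanSpace ℝ (Fin d))) (u : EuclideanSpace ℝ (Fin d) → ℝ) : Prop :=
  ∃ φ : ℕ → EuclideanSpace ℝ (Fin d) → ℝ, (∀ n, Test Ω (φ n)) ∧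
    Tendsto (fun n => ∫ x in Ω, (φ n x - u x) ^ 2) atTop (nhds 0) ∧
    ∀ ε > 0, ∃ N, ∀ m ≥ N, ∀ n ≥ N,
      ∫ x in Ω, ((φ m x - φ n x) ^ 2 + ‖fderiv ℝ (φ m) x - fderiv ℝ (φ n) x‖ ^ 2
        + ‖iteratedFDeriv ℝ 2 (φ m) x - iteratedFDeriv ℝ 2 (φ n) x‖ ^ 2) < ε

/-- `u ∈ H¹₀(Ω)`. -/
def MemH10 {d : ℕ} (Ω : Set (EuclideanSpace ℝ (Fin d))) (u : EuclideanSpace ℝ (Fin d) → ℝ) : Prop :=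
  ∃ φ : ℕ → EuclideanSpace ℝ (Fin d) → ℝ, (∀ n, Test Ω (φ n)) ∧
    Tendsto (fun n => ∫ x in Ω, (φ n x - u x) ^ 2) atTop (nhds 0) ∧
    ∀ ε > 0, ∃ N, ∀ m ≥ N, ∀ n ≥ N,
      ∫ x in Ω, ((φ m x - φ n x) ^ 2 + ‖fderiv ℝ (φ m) x - fderiv ℝ (φ n) x‖ ^ 2) < ε

/-- `v` is the weak Laplacian of `u` on `Ω`. -/
def IsWeakLap {d : ℕ} (Ω : Set (EuclideanSpace ℝ (Fin d))) (u v : EuclideanSpace ℝ (Fin d) → ℝ) : Prop :=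
  ∀ φ, Test Ω φ → ∫ x in Ω, u x * lap φ x = ∫ x in Ω, v x * φ x

/-- `G` is the weak gradient of `u` on `Ω`. -/
def IsWeakGrad {d : ℕ} (Ω : Set (EuclideanSpace ℝ (Fin d)))
    (u : EuclideanSpace ℝ (Fin d) → ℝ) (G : EuclideanSpace ℝ (Fin d) → EuclideanSpace ℝ (Fin d)) : Prop :=
  ∀ φ, Test Ω φ → ∫ x in Ω, u x • gradient φ x = - ∫ x in Ω, φ x • G x

/-- A bounded open set with boundary of class `C⁴`, described by a defining function. -/
def C4Domain {d : ℕ} (Ω : Set (EuclideanSpace ℝ (Fin d))) : Prop :=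
  IsOpen Ω ∧ IsBounded Ω ∧ ∃ f : EuclideanSpace ℝ (Fin d) → ℝ, ContDiff ℝ 4 f ∧
    Ω = {x | f x < 0} ∧ ∀ x ∈ frontier Ω, fderiv ℝ f x ≠ 0

open Metric Set
open scoped Convolution ENNReal

section Aux

variable {d : ℕ}

instance instTietzeEuclidean : TietzeExtension (EuclideanSpace ℝ (Fin d)) :=
  .of_homeo (EuclideanSpace.equiv (Fin d) ℝ).toHomeomorph

/-- Uniform approximation on a compact set of a continuous vector field by a smooth compactly
supported one. -/
lemma smooth_cpt_approx (K : Set (EuclideanSpace ℝ (Fin d))) (hK : IsCompact K)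
    (w : EuclideanSpace ℝ (Fin d) → EuclideanSpace ℝ (Fin d)) (hw : ContinuousOn w K)
    {ε : ℝ} (hε : 0 < ε) :
    ∃ v : EuclideanSpace ℝ (Fin d) → EuclideanSpace ℝ (Fin d),
      ContDiff ℝ ((⊤:ℕ∞) : WithTop ℕ∞) v ∧ HasCompactSupport v ∧ ∀ x ∈ K, ‖v x - w x‖ ≤ ε := by
  -- Tietze extension of `w` off `K`
  obtain ⟨W, hW⟩ := ContinuousMap.exists_restrict_eq (Y := EuclideanSpace ℝ (Fin d))
    hK.isClosed ⟨K.restrict w, hw.restrict⟩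
  have hWeq : ∀ x ∈ K, W x = w x := by
    intro x hx
    have := congrFun (congrArg DFunLike.coe hW) ⟨x, hx⟩
    exact this
  -- cutoff to get compact support
  obtain ⟨r, hr⟩ := hK.isBounded.subset_closedBall 0
  set R : ℝ := max r 1 with hRdef
  have hR0 : (0 : ℝ) < R := lt_of_lt_of_le one_pos (le_max_right _ _)
  have hKR : K ⊆ closedBall 0 R := hr.trans (closedBall_subset_closedBall (le_max_left _ _))
  set χ : ContDiffBump (0 : EuclideanSpace ℝ (Fin d)) := ⟨R, R + 1, hR0, by linarith⟩ with hχ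
  set W' : EuclideanSpace ℝ (Fin d) → EuclideanSpace ℝ (Fin d) := fun x => χ x • W x with hW'
  have hW'c : Continuous W' := χ.continuous.smul W.continuous
  have hW'cs : HasCompactSupport W' := χ.hasCompactSupport.smul_right
  have hW'eq : ∀ x ∈ K, W' x = w x := by
    intro x hx
    rw [hW']
    simp only
    rw [χ.one_of_mem_closedBall (hKR hx), one_smul, hWeq x hx]
  -- uniform continuity
  have hUC : UniformContinuous W' :=
    hW'c.uniformContinuous_of_tendsto_cocompact hW'cs.is_zero_at_infty
  obtain ⟨δ, hδ0, hδ⟩ := Metric.uniformContinuous_iff.mp hUC ε hε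
  set φb : ContDiffBump (0 : EuclideanSpace ℝ (Fin d)) := ⟨δ / 2, δ, by positivity, by linarith⟩
    with hφb
  refine ⟨φb.normed volume ⋆[ContinuousLinearMap.lsmul ℝ ℝ, volume] W', ?_, ?_, ?_⟩
  · exact φb.hasCompactSupport_normed.contDiff_convolution_left (ContinuousLinearMap.lsmul ℝ ℝ) (φb.contDiff_normed (μ := volume))
      (hW'c.locallyIntegrable (μ := volume))
  · exact φb.hasCompactSupport_normed.convolution (ContinuousLinearMap.lsmul ℝ ℝ) hW'cs
  · intro x hx
    have hball : ∀ y ∈ ball x φb.rOut, dist (W' y) (W' x) ≤ ε := by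
      intro y hy
      exact le_of_lt (hδ (by simpa [hφb, dist_comm] using hy))
    have := φb.dist_normed_convolution_le (μ := volume) hW'c.aestronglyMeasurable hball
    rw [dist_eq_norm] at this
    rwa [hW'eq x hx] at this

lemma bounded_iterated (V : EuclideanSpace ℝ (Fin d) → EuclideanSpace ℝ (Fin d))
    (hV : ContDiff ℝ ((⊤:ℕ∞) : WithTop ℕ∞) V) (hVc : HasCompactSupport V) (i : ℕ) :
    ∃ C, ∀ x, ‖iteratedFDeriv ℝ i V x‖ ≤ C :=
  (hVc.iteratedFDeriv i).exists_bound_of_continuous (hV.continuous_iteratedFDeriv (WithTop.coe_le_coe.mpr le_top))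

end Aux

/-- Density of normal traces of mean-zero `W^{5,∞}` vector fields in the space of mean-zero
continuous functions on `∂Ω`, for a `C⁴` bounded open set `Ω` with defining function `f` and
outward unit normal `n = ∇f/‖∇f‖`. -/
theorem stmt7 {d : ℕ} (Ω : Set (EuclideanSpace ℝ (Fin d)))
    (hopen : IsOpen Ω) (hbdd : IsBounded Ω)
    (f : EuclideanSpace ℝ (Fin d) → ℝ) (hf : ContDiff ℝ 4 f)
    (hΩf : Ω = {x | f x < 0}) (hreg : ∀ x ∈ frontier Ω, gradient f x ≠ 0)
    (n : EuclideanSpace ℝ (Fin d) → EuclideanSpace ℝ (Fin d))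
    (hn : n = fun x => ‖gradient f x‖⁻¹ • gradient f x)
    (σ : Measure (EuclideanSpace ℝ (Fin d)))
    (hσ : σ = (μH[(d : ℝ) - 1] : Measure (EuclideanSpace ℝ (Fin d))).restrict (frontier Ω)) :
    ∀ φ : EuclideanSpace ℝ (Fin d) → ℝ, ContinuousOn φ (frontier Ω) → (∫ x, φ x ∂σ) = 0 →
      ∀ ε > 0, ∃ V : EuclideanSpace ℝ (Fin d) → EuclideanSpace ℝ (Fin d),
        ContDiff ℝ 5 V ∧ (∀ i : ℕ, i ≤ 5 → ∃ C, ∀ x, ‖iteratedFDeriv ℝ i V x‖ ≤ C) ∧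
        (∫ x, (inner ℝ (V x) (n x) : ℝ) ∂σ) = 0 ∧
        ∀ x ∈ frontier Ω, |(inner ℝ (V x) (n x) : ℝ) - φ x| < ε := by
  intro φ hφc hφ0 ε hε
  have hKclosed : IsClosed (frontier Ω) := isClosed_frontier
  have hKcpt : IsCompact (frontier Ω) :=
    Metric.isCompact_of_isClosed_isBounded hKclosed (hbdd.closure.subset frontier_subset_closure)
  -- continuity and measurability of the normal field
  have hgc : Continuous (gradient f) := by
    have h1 : Continuous (fderiv ℝ f) := hf.continuous_fderiv (by norm_num)
    exact (InnerProductSpace.toDual ℝ (EuclideanSpace ℝ (Fin d))).symm.continuous.comp h1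
  have hnK : ContinuousOn n (frontier Ω) := by
    rw [hn]
    exact (hgc.continuousOn.norm.inv₀ fun x hx => norm_ne_zero_iff.mpr (hreg x hx)).smul
      hgc.continuousOn
  have hunit : ∀ x ∈ frontier Ω, ‖n x‖ = 1 := by
    intro x hx
    rw [hn]
    simp only
    rw [norm_smul, norm_inv, norm_norm, inv_mul_cancel₀ (norm_ne_zero_iff.mpr (hreg x hx))]
  have hnle : ∀ x, ‖n x‖ ≤ 1 := by
    intro x
    rw [hn]
    simp only
    rcases eq_or_ne (gradient f x) 0 with h0 | h0
    · simp [h0]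
    · rw [norm_smul, norm_inv, norm_norm, inv_mul_cancel₀ (norm_ne_zero_iff.mpr h0)]
  have hinner_nn : ∀ x ∈ frontier Ω, (inner ℝ (n x) (n x) : ℝ) = 1 := by
    intro x hx
    rw [real_inner_self_eq_norm_sq, hunit x hx]
    norm_num
  have hnmeas : Measurable n := by
    rw [hn]
    exact (hgc.norm.measurable.inv).smul hgc.measurable
  have haeK : ∀ᵐ x ∂σ, x ∈ frontier Ω := by
    rw [hσ]; exact ae_restrict_mem hKclosed.measurableSet
  -- the two approximating fields
  obtain ⟨V₁, hV₁s, hV₁c, hV₁⟩ := smooth_cpt_approx (frontier Ω) hKcpt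
    (fun x => φ x • n x) (hφc.smul hnK) (show (0:ℝ) < ε/5 by linarith)
  obtain ⟨U, hUs, hUc, hU⟩ := smooth_cpt_approx (frontier Ω) hKcpt n hnK one_half_pos
  set g : EuclideanSpace ℝ (Fin d) → ℝ := fun x => inner ℝ (V₁ x) (n x) with hgdef
  set h : EuclideanSpace ℝ (Fin d) → ℝ := fun x => inner ℝ (U x) (n x) with hhdef
  have hgφ : ∀ x ∈ frontier Ω, |g x - φ x| ≤ ε/5 := by
    intro x hx
    have heq : g x - φ x = inner ℝ (V₁ x - φ x • n x) (n x) := by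
      rw [inner_sub_left, real_inner_smul_left, hinner_nn x hx, mul_one]
    rw [heq]
    calc |(inner ℝ (V₁ x - φ x • n x) (n x) : ℝ)| ≤ ‖V₁ x - φ x • n x‖ * ‖n x‖ :=
          abs_real_inner_le_norm _ _
      _ ≤ (ε/5) * 1 := by
          rw [hunit x hx]
          exact mul_le_mul_of_nonneg_right (hV₁ x hx) zero_le_one
      _ = ε/5 := mul_one _
  have hh1 : ∀ x ∈ frontier Ω, |h x - 1| ≤ 1/2 := by
    intro x hx
    have heq : h x - 1 = inner ℝ (U x - n x) (n x) := by
      rw [inner_sub_left, hinner_nn x hx]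
    rw [heq]
    calc |(inner ℝ (U x - n x) (n x) : ℝ)| ≤ ‖U x - n x‖ * ‖n x‖ := abs_real_inner_le_norm _ _
      _ ≤ (1/2) * 1 := by
          rw [hunit x hx]
          exact mul_le_mul_of_nonneg_right (hU x hx) zero_le_one
      _ = 1/2 := mul_one _
  have hhlow : ∀ x ∈ frontier Ω, (1/2 : ℝ) ≤ h x := by
    intro x hx
    have := abs_le.mp (hh1 x hx)
    linarith [this.1]
  have hhup : ∀ x ∈ frontier Ω, |h x| ≤ 3/2 := by
    intro x hx
    have := abs_le.mp (hh1 x hx)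
    rw [abs_le]
    constructor <;> linarith [this.1, this.2]
  have hgm : AEStronglyMeasurable g σ :=
    (hV₁s.continuous.measurable.inner hnmeas).aestronglyMeasurable
  have hhm : AEStronglyMeasurable h σ :=
    (hUs.continuous.measurable.inner hnmeas).aestronglyMeasurable
  -- candidate fields `V₁ + t • U`
  have hVsm : ∀ t : ℝ, ContDiff ℝ ((⊤:ℕ∞) : WithTop ℕ∞) (fun x => V₁ x + t • U x) := fun t =>
    hV₁s.add (hUs.const_smul t)
  have hVcs : ∀ t : ℝ, HasCompactSupport (fun x => V₁ x + t • U x) := fun t =>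
    hV₁c.add (hUc.mono (Function.support_const_smul_subset t U))
  have hVn : ∀ (t : ℝ) (x : EuclideanSpace ℝ (Fin d)),
      (inner ℝ (V₁ x + t • U x) (n x) : ℝ) = g x + t * h x := by
    intro t x
    rw [inner_add_left, real_inner_smul_left]
  have hieq : ∀ t : ℝ, (∫ x, (inner ℝ (V₁ x + t • U x) (n x) : ℝ) ∂σ)
      = ∫ x, (g x + t * h x) ∂σ := fun t =>
    integral_congr_ae (Filter.Eventually.of_forall fun x => hVn t x)
  have hpt : ∀ t : ℝ, |t| ≤ 2 * (ε/5) → ∀ x ∈ frontier Ω,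
      |(inner ℝ (V₁ x + t • U x) (n x) : ℝ) - φ x| < ε := by
    intro t ht x hx
    rw [hVn t x]
    have e : g x + t * h x - φ x = (g x - φ x) + t * h x := by ring
    rw [e]
    have h3 : |(g x - φ x) + t * h x| ≤ |g x - φ x| + |t| * |h x| := by
      refine (abs_add_le _ _).trans ?_
      rw [abs_mul]
    have h4 : |t| * |h x| ≤ (2 * (ε/5)) * (3/2) :=
      mul_le_mul ht (hhup x hx) (abs_nonneg _) (by positivity)
    have h5 := hgφ x hx
    calc |(g x - φ x) + t * h x| ≤ |g x - φ x| + |t| * |h x| := h3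
      _ ≤ ε/5 + (2 * (ε/5)) * (3/2) := by linarith
      _ < ε := by linarith
  by_cases hInt : Integrable h σ
  · -- `σ` is a finite measure in this case
    have hhalf : ∀ᵐ x ∂σ, (1/2 : ℝ) ≤ h x := haeK.mono fun x hx => hhlow x hx
    have hfin : σ Set.univ < ⊤ := by
      have h1 : σ Set.univ ≤ σ {a | (1/2 : ℝ) ≤ h a} := by
        refine measure_mono_ae (hhalf.mono fun x hx => ?_)
        intro _
        exact hx
      exact lt_of_le_of_lt h1 (hInt.measure_ge_lt_top one_half_pos)
    haveI hσfin : IsFiniteMeasure σ := ⟨hfin⟩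
    by_cases h0 : σ Set.univ = 0
    · -- the measure is zero : no constraint from the integral
      have hσ0 : σ = 0 := Measure.measure_univ_eq_zero.mp h0
      refine ⟨fun x => V₁ x + (0:ℝ) • U x, (hVsm 0).of_le (by rw [show (5 : WithTop ℕ∞) = ((5:ℕ∞) : WithTop ℕ∞) from rfl]; exact WithTop.coe_le_coe.mpr le_top),
        fun i _ => bounded_iterated _ (hVsm 0) (hVcs 0) i, ?_, hpt 0 (by simp; linarith) ⟩
      rw [hσ0]
      simp
    · -- main case : correct the mean by a multiple of `U`
      have hS : 0 < (σ Set.univ).toReal := ENNReal.toReal_pos h0 hfin.ne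
      set S := (σ Set.univ).toReal with hSdef
      have hgint : Integrable g σ := by
        obtain ⟨C₁, hC₁⟩ := hV₁c.exists_bound_of_continuous hV₁s.continuous
        refine (integrable_const C₁).mono' hgm (Filter.Eventually.of_forall fun x => ?_)
        calc ‖g x‖ = |(inner ℝ (V₁ x) (n x) : ℝ)| := rfl
          _ ≤ ‖V₁ x‖ * ‖n x‖ := abs_real_inner_le_norm _ _
          _ ≤ C₁ * 1 := mul_le_mul (hC₁ x) (hnle x) (norm_nonneg _)
              (le_trans (norm_nonneg _) (hC₁ x))
          _ = C₁ := mul_one _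
      have hφm : AEStronglyMeasurable φ σ := by
        rw [hσ]
        exact hφc.aestronglyMeasurable hKclosed.measurableSet
      obtain ⟨Cφ, hCφ⟩ := hKcpt.exists_bound_of_continuousOn hφc
      have hφint : Integrable φ σ :=
        (integrable_const Cφ).mono' hφm (haeK.mono fun x hx => hCφ x hx)
      set I := ∫ x, h x ∂σ with hIdef
      set c := ∫ x, g x ∂σ with hcdef
      have hIconst : ∫ _ : EuclideanSpace ℝ (Fin d), (1/2 : ℝ) ∂σ = S * (1/2) := by
        rw [integral_const, smul_eq_mul]
        rfl
      have hI : S/2 ≤ I := by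
        have h1 : ∫ _, (1/2 : ℝ) ∂σ ≤ ∫ x, h x ∂σ :=
          integral_mono_ae (integrable_const _) hInt hhalf
        rw [hIconst] at h1
        linarith
      have hIpos : 0 < I := lt_of_lt_of_le (by linarith) hI
      have hc : |c| ≤ (ε/5) * S := by
        have h1 : c = ∫ x, (g x - φ x) ∂σ := by
          rw [integral_sub hgint hφint, hφ0, sub_zero]
        rw [h1]
        have h2 := norm_integral_le_of_norm_le_const (μ := σ) (C := ε/5)
          (f := fun x => g x - φ x)
          (haeK.mono fun x hx => by simpa [Real.norm_eq_abs] using hgφ x hx)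
        simpa [Real.norm_eq_abs, measureReal_def, hSdef] using h2
      set t := -(c / I) with htdef
      have ht : |t| ≤ 2 * (ε/5) := by
        rw [htdef, abs_neg, abs_div, abs_of_pos hIpos, div_le_iff₀ hIpos]
        calc |c| ≤ (ε/5) * S := hc
          _ ≤ 2 * (ε/5) * I := by nlinarith
      refine ⟨fun x => V₁ x + t • U x, (hVsm t).of_le (by rw [show (5 : WithTop ℕ∞) = ((5:ℕ∞) : WithTop ℕ∞) from rfl]; exact WithTop.coe_le_coe.mpr le_top),
        fun i _ => bounded_iterated _ (hVsm t) (hVcs t) i, ?_, hpt t ht⟩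
      rw [hieq t, integral_add hgint (hInt.const_mul t), integral_const_mul, ← hcdef, ← hIdef,
        htdef]
      field_simp
      ring
  · -- `h` is not integrable : the integral vanishes for a suitable small `t ≠ 0`
    have hε5 : |(ε/5 : ℝ)| ≤ 2 * (ε/5) := by
      rw [abs_of_pos (by linarith)]
      linarith
    have hε5' : |(-(ε/5) : ℝ)| ≤ 2 * (ε/5) := by
      rw [abs_neg]
      exact hε5
    by_cases hInt2 : Integrable (fun x => g x + (ε/5) * h x) σ
    · have hni : ¬ Integrable (fun x => g x + (-(ε/5)) * h x) σ := by
        intro hcon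
        have hsub : Integrable (fun x => (g x + (ε/5) * h x) - (g x + (-(ε/5)) * h x)) σ :=
          hInt2.sub hcon
        have heq2 : (fun x => (g x + (ε/5) * h x) - (g x + (-(ε/5)) * h x))
            = fun x => (2 * (ε/5)) * h x := by
          funext x
          ring
        rw [heq2] at hsub
        have h3 : Integrable (fun x => (2 * (ε/5))⁻¹ * ((2 * (ε/5)) * h x)) σ :=
          hsub.const_mul _
        have heq3 : (fun x => (2 * (ε/5))⁻¹ * ((2 * (ε/5)) * h x)) = h := by
          funext x
          field_simp
        rw [heq3] at h3
        exact hInt h3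
      refine ⟨fun x => V₁ x + (-(ε/5)) • U x, (hVsm _).of_le (by rw [show (5 : WithTop ℕ∞) = ((5:ℕ∞) : WithTop ℕ∞) from rfl]; exact WithTop.coe_le_coe.mpr le_top),
        fun i _ => bounded_iterated _ (hVsm _) (hVcs _) i, ?_, hpt _ hε5'⟩
      rw [hieq]
      exact integral_undef hni
    · refine ⟨fun x => V₁ x + (ε/5) • U x, (hVsm _).of_le (by rw [show (5 : WithTop ℕ∞) = ((5:ℕ∞) : WithTop ℕ∞) from rfl]; exact WithTop.coe_le_coe.mpr le_top),
        fun i _ => bounded_iterated _ (hVsm _) (hVcs _) i, ?_, hpt _ hε5⟩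
      rw [hieq]
      exact integral_undef hInt2
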